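/- (S_finish, S_3, [0,1], [1/4, 1/2))↓ holds: from every configuration in which robot r is in state S_finish with observed distance in [0,1] and robot s is in state S_3 with observed distance in [1/4, 1/2), every fair SSynch execution of Algorithm 1 solves rendezvous. -/

import Mathlib

/-- Points in the plane. -/
abbrev Pt := EuclideanSpace ℝ (Fin 2)

/-- Observed directions. -/
inductive Dir | left | right
deriving DecidableEq

/-- The six internal states of Algorithm 1. -/
inductive St | start | s1 | s2 (d : Dir) | s3 | finish
deriving DecidableEq

/-- A local coordinate frame: an orthogonal linear map of the plane. -/
abbrev Frame := Pt ≃ₗᵢ[ℝ] Pt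

/-- Observed direction of a local vector `v`: `right` if its first coordinate is
positive, or is zero with positive second coordinate; `left` otherwise. -/
noncomputable def obsDir (v : Pt) : Dir :=
  if 0 < v 0 ∨ (v 0 = 0 ∧ 0 < v 1) then Dir.right else Dir.left

/-- Local vector observed by a robot with unit distance `u` and frame `A`,
located at `p`, looking at the other robot at `q`. -/
noncomputable def obsVec (u : ℝ) (A : Frame) (p q : Pt) : Pt := u⁻¹ • (A (q - p))

/-- Observed distance. -/
noncomputable def obsDist (u : ℝ) (p q : Pt) : ℝ := ‖q - p‖ / u

/-- Algorithm 1: given the current state, the observed distance `d` and the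
observed direction `dir`, returns the new state and the coefficient `μ` such
that the (global) destination is `p + μ • (q - p)` (i.e. local destination `μ • v`). -/
noncomputable def algo1 (s : St) (d : ℝ) (dir : Dir) : St × ℝ :=
  if d = 0 then (s, 0)
  else match s with
  | .start => if d < 1 then (.s1, 1 - 1/d) else (.s2 dir, 1)
  | .s1 => if d ≤ 1 then (.finish, 0) else (.s2 dir, 1)
  | .s2 d' =>
      if dir = d' then (.finish, 1)
      else if d < 1/2 then (.finish, 0)
      else if d < 1 then (.s3, 1/2)
      else (.s2 d', 1/2)
  | .s3 => if d < 1/4 then (.finish, 0) else (.finish, 1)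
  | .finish => if d ≤ 1 then (.finish, 0) else (.finish, 1)

/-- A configuration: positions and internal states of the two robots
(robot `r` is `false`, robot `s` is `true`). -/
structure Config where
  pos : Bool → Pt
  st : Bool → St

/-- Result (new position, new state) of one activation of robot `i`. -/
noncomputable def stepRobot (u : Bool → ℝ) (A : Bool → Frame) (c : Config) (i : Bool) :
    Pt × St :=
  let p := c.pos i
  let q := c.pos (!i)
  let d := obsDist (u i) p q
  let dir := obsDir (obsVec (u i) (A i) p q)
  let r := algo1 (c.st i) d dir
  (p + r.2 • (q - p), r.1)

/-- One synchronous round in which exactly the robots `i` with `act i = true`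
are activated; both activated robots observe the same (pre-round) configuration,
and rigidly reach their computed destinations. -/
noncomputable def stepConfig (u : Bool → ℝ) (A : Bool → Frame) (act : Bool → Bool)
    (c : Config) : Config where
  pos i := if act i then (stepRobot u A c i).1 else c.pos i
  st i := if act i then (stepRobot u A c i).2 else c.st i

/-- The configuration after `n` rounds of the SSynch execution of Algorithm 1
under schedule `sched`, starting from `c0`. -/
noncomputable def run (u : Bool → ℝ) (A : Bool → Frame) (sched : ℕ → Bool → Bool)
    (c0 : Config) : ℕ → Config
  | 0 => c0
  | n + 1 => stepConfig u A (sched n) (run u A sched c0 n)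

/-- A legal fair SSynch schedule: at every round a nonempty set of robots is
activated, and each robot is activated infinitely often. -/
def FairSched (sched : ℕ → Bool → Bool) : Prop :=
  (∀ n, sched n false = true ∨ sched n true = true) ∧
  (∀ i n, ∃ m, n ≤ m ∧ sched m i = true)

/-- Rendezvous is solved: from some round on, the two robots occupy the same
point and never move again. -/
noncomputable def Solves (u : Bool → ℝ) (A : Bool → Frame) (sched : ℕ → Bool → Bool)
    (c0 : Config) : Prop :=
  ∃ N : ℕ, ∀ n, N ≤ n → ∀ i, (run u A sched c0 n).pos i = (run u A sched c0 N).pos false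

/-- Conditions on a robot: one of the six internal states, or `S₂⁼` / `S₂≠`. -/
inductive Cond | start | s1 | s2 (d : Dir) | s2eq | s2ne | s3 | finish

/-- A robot in state `s` whose currently observed direction is `dir`
satisfies the condition. -/
def Cond.sat : Cond → St → Dir → Prop
  | .start, s, _ => s = .start
  | .s1, s, _ => s = .s1
  | .s2 d', s, _ => s = .s2 d'
  | .s2eq, s, dir => s = .s2 dir
  | .s2ne, s, dir => ∃ d', s = St.s2 d' ∧ d' ≠ dir
  | .s3, s, _ => s = .s3
  | .finish, s, _ => s = .finish

/-- `(S_a, S_b, I_a, I_b)↓` : for every choice of the units and frames, from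
every configuration in which robot `r` satisfies condition `Ca` with observed
distance in `Ia` and robot `s` satisfies condition `Cb` with observed distance
in `Ib`, every fair SSynch execution of Algorithm 1 solves Rendezvous. -/
noncomputable def Down (Ca Cb : Cond) (Ia Ib : Set ℝ) : Prop :=
  ∀ (u : Bool → ℝ) (A : Bool → Frame), (∀ i, 0 < u i) →
    ∀ c0 : Config,
      Ca.sat (c0.st false)
        (obsDir (obsVec (u false) (A false) (c0.pos false) (c0.pos true))) →
      obsDist (u false) (c0.pos false) (c0.pos true) ∈ Ia →
      Cb.sat (c0.st true)
        (obsDir (obsVec (u true) (A true) (c0.pos true) (c0.pos false))) →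
      obsDist (u true) (c0.pos true) (c0.pos false) ∈ Ib →
      ∀ sched : ℕ → Bool → Bool, FairSched sched → Solves u A sched c0

/-!
Robot `r`, in state `S_finish` at observed distance at most `1`, stays put and keeps its
state whenever it is activated, so the configuration is frozen until the first activation
of `s`. At that moment `s`, in state `S_3` at observed distance at least `1/4`, moves
exactly onto `r`; once the robots coincide every observed distance is `0` and nobody
moves again.
-/

lemma algo1_zero (s : St) (dir : Dir) : algo1 s 0 dir = (s, 0) := by
  simp [algo1]

lemma algo1_finish_of_le_one {d : ℝ} (hd : d ≤ 1) (dir : Dir) :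
    algo1 .finish d dir = (.finish, 0) := by
  by_cases h0 : d = 0 <;> simp [algo1, h0, hd]

lemma algo1_s3_of_quarter_le {d : ℝ} (hd : 1 / 4 ≤ d) (dir : Dir) :
    algo1 .s3 d dir = (.finish, 1) := by
  have h0 : d ≠ 0 := (lt_of_lt_of_le (by norm_num) hd).ne'
  simpa [algo1, h0] using hd

section Execution

variable (u : Bool → ℝ) (A : Bool → Frame)

lemma stepConfig_pos_of_gathered (act : Bool → Bool) {c : Config}
    (h : c.pos false = c.pos true) (i : Bool) :
    (stepConfig u A act c).pos i = c.pos i := by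
  have hother : c.pos (!i) = c.pos i := by cases i <;> simp [h]
  simp [stepConfig, stepRobot, hother, obsDist, algo1_zero]

lemma solves_of_gathered (sched : ℕ → Bool → Bool) (c0 : Config) {N : ℕ}
    (h : (run u A sched c0 N).pos false = (run u A sched c0 N).pos true) :
    Solves u A sched c0 := by
  refine ⟨N, fun n hn => ?_⟩
  induction n, hn using Nat.le_induction with
  | base => intro i; cases i <;> simp [h]
  | succ n _ ih =>
    intro i
    have hgathered : (run u A sched c0 n).pos false = (run u A sched c0 n).pos true := by
      rw [ih false, ih true]
    rw [run, stepConfig_pos_of_gathered u A _ hgathered, ih]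

lemma run_eq_self_of_stepConfig_eq_self (sched : ℕ → Bool → Bool) (c0 : Config) {m : ℕ}
    (h : ∀ n < m, stepConfig u A (sched n) c0 = c0) : run u A sched c0 m = c0 := by
  induction m with
  | zero => rfl
  | succ m ih =>
    rw [run, ih fun n hn => h n (hn.trans m.lt_succ_self)]
    exact h m m.lt_succ_self

variable {c : Config} (hr : c.st false = .finish)
  (hdr : obsDist (u false) (c.pos false) (c.pos true) ≤ 1)
include hr hdr

lemma stepRobot_finish_of_le_one : stepRobot u A c false = (c.pos false, .finish) := by
  simp [stepRobot, hr, algo1_finish_of_le_one hdr]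

lemma stepConfig_eq_self_of_not_activated {act : Bool → Bool} (hact : act true = false) :
    stepConfig u A act c = c := by
  obtain ⟨pos, st⟩ := c
  simp only [stepConfig, Config.mk.injEq]
  constructor <;> funext i <;> cases i <;>
    simp_all [stepRobot_finish_of_le_one u A hr hdr]

lemma stepConfig_gathered_of_activated (hs : c.st true = .s3)
    (hds : 1 / 4 ≤ obsDist (u true) (c.pos true) (c.pos false))
    {act : Bool → Bool} (hact : act true = true) :
    (stepConfig u A act c).pos false = (stepConfig u A act c).pos true := by
  have hmove : (stepRobot u A c true).1 = c.pos false := by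
    simp [stepRobot, hs, algo1_s3_of_quarter_le hds]
  simp only [stepConfig, hact, if_true, hmove, stepRobot_finish_of_le_one u A hr hdr]
  split <;> rfl

end Execution

/-- Lemma 3: `(S_finish, S_3, [0,1], [1/4, 1/2))↓`. -/
theorem lemma_l4 :
    Down Cond.finish Cond.s3 (Set.Icc (0 : ℝ) 1) (Set.Ico (1/4 : ℝ) (1/2)) := by
  intro u A _ c0 hr hdr hs hds sched hfair
  have hs_activated : ∃ m, sched m true = true := by
    obtain ⟨m, -, hm⟩ := hfair.2 true 0
    exact ⟨m, hm⟩
  set m := Nat.find hs_activated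
  have hfrozen : run u A sched c0 m = c0 :=
    run_eq_self_of_stepConfig_eq_self u A sched c0 fun n hn =>
      stepConfig_eq_self_of_not_activated u A hr hdr.2
        (Bool.eq_false_iff.mpr (Nat.find_min hs_activated hn))
  apply solves_of_gathered u A sched c0 (N := m + 1)
  rw [run, hfrozen]
  exact stepConfig_gathered_of_activated u A hr hdr.2 hs hds.1 (Nat.find_spec hs_activated)
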